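/- Let q ≥ 1 and let S_1, …, S_m be 3-element subsets of {1,…,3q}, with S_i = {x_{i,1}, x_{i,2}, x_{i,3}}. Let T be the tree with root r and, for each i ∈ {1,…,m}, two paths attached to r: the path r — a_i¹ — e_{i,1} — e_{i,2} — e_{i,3} — b_i¹ and the path r — a_i² — b_i². Color the vertices by c(a_i¹) = c(a_i²) = i, c(b_i¹) = c(b_i²) = m + i, c(e_{i,j}) = 2m + x_{i,j} for j ∈ {1,2,3}, and c(r) = 2m + 3q + 1, and let M be the multiset containing each color of {1, …, 2m + 3q + 1} exactly once. Then (T, c, M) has a motif solution if and only if there exists 𝒯 ⊆ {1,…,m} such that every element of {1,…,3q} belongs to exactly one set S_i with i ∈ 𝒯 (an exact cover by 3-sets). -/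

import Mathlib

/-- A motif solution of an instance `(G, c, M)`: a set `R` of vertices such that the
induced subgraph `G[R]` is connected and the multiset of colors of `R` equals `M`. -/
def IsMotifSolution {V C : Type*} (G : SimpleGraph V) (c : V → C) (M : Multiset C)
    (R : Finset V) : Prop :=
  (G.induce (R : Set V)).Connected ∧ Multiset.map c R.val = M

/-- The tree of Statement 9 on vertex set `Option (Fin m × Fin 7)`: `none` is the root
`r`, and for each `i`, `some (i,0) = aᵢ¹`, `some (i,1), some (i,2), some (i,3)` are
`e_{i,1}, e_{i,2}, e_{i,3}`, `some (i,4) = bᵢ¹`, `some (i,5) = aᵢ²`, `some (i,6) = bᵢ²`.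
Edges: `r—aᵢ¹`, the path `aᵢ¹—e_{i,1}—e_{i,2}—e_{i,3}—bᵢ¹`, and `r—aᵢ²—bᵢ²`. -/
def x3cRel (m : ℕ) (a b : Option (Fin m × Fin 7)) : Prop :=
  (∃ i : Fin m, a = none ∧ (b = some (i, 0) ∨ b = some (i, 5))) ∨
  (∃ (i : Fin m) (j j' : Fin 7), j.val < 4 ∧ j'.val = j.val + 1 ∧
    a = some (i, j) ∧ b = some (i, j')) ∨
  (∃ i : Fin m, a = some (i, 5) ∧ b = some (i, 6))

/-- The coloring of Statement 9: `c(aᵢ¹) = c(aᵢ²) = i`, `c(bᵢ¹) = c(bᵢ²) = m + i`,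
`c(e_{i,j}) = 2m + x_{i,j}`, `c(r) = 2m + 3q + 1` (colors written in `{1, …, 2m+3q+1}`,
indices one-based). -/
def x3cColor (m q : ℕ) (x : Fin m → Fin 3 → Fin (3 * q)) :
    Option (Fin m × Fin 7) → ℕ
  | none => 2 * m + 3 * q + 1
  | some (i, j) =>
    match j.val with
    | 0 => i.val + 1
    | 1 => 2 * m + (x i 0).val + 1
    | 2 => 2 * m + (x i 1).val + 1
    | 3 => 2 * m + (x i 2).val + 1
    | 4 => m + i.val + 1
    | 5 => i.val + 1
    | _ => m + i.val + 1

/-!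
Rooted at `r`, the tree is described by a parent map, and a vertex set containing `r` induces
a connected subgraph exactly when it is closed under taking parents. A solution contains `r`
(its colour occurs nowhere else) and exactly one of `aᵢ¹, aᵢ²` for each `i`. If it contains
`aᵢ¹`, it must also contain `bᵢ¹`, since `bᵢ²` would drag in `aᵢ²` and repeat the colour `i`;
so it contains the whole long path of `i`. The indices whose long path is taken then carry
each element colour exactly once, i.e. they form an exact cover. Conversely, an exact cover `T`
yields the solution made of the long paths of `i ∈ T` and the short paths of the other `i`.
-/

namespace SimpleGraph

variable {V : Type*} {G : SimpleGraph V} {R : Set V} {p : V → V} {r : V}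

theorem parent_mem_of_induce_connected (hadj : ∀ a b, G.Adj a b → a = p b ∨ b = p a)
    (hpr : p r = r) (hR : (G.induce R).Connected) (hr : r ∈ R) {v : V} (hv : v ∈ R) :
    p v ∈ R := by
  by_cases hvr : v = r
  · subst hvr; rwa [hpr]
  -- A walk from `v` to `r` leaves the descendants `S` of `v`, and the only edge out of `S` ends at `p v`.
  let S : Set R := {u | ∃ n, p^[n] u = v}
  have hrS : (⟨r, hr⟩ : R) ∉ S := fun ⟨n, hn⟩ ↦ hvr (by rw [← hn, Function.iterate_fixed hpr])
  obtain ⟨d, -, ⟨n, hn⟩, hsnd⟩ :=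
    (hR.preconnected ⟨v, hv⟩ ⟨r, hr⟩).some.exists_boundary_dart S ⟨0, rfl⟩ hrS
  have hd : G.Adj d.fst d.snd := d.adj
  rcases hadj _ _ hd with h | h
  · exact absurd ⟨n + 1, by rw [Function.iterate_succ_apply, ← h, hn]⟩ hsnd
  · cases n with
    | zero => rw [← hn, Function.iterate_zero_apply, ← h]; exact d.snd.2
    | succ n => exact absurd ⟨n, by rw [h, ← Function.iterate_succ_apply, hn]⟩ hsnd

theorem iterate_mem_of_induce_connected (hadj : ∀ a b, G.Adj a b → a = p b ∨ b = p a)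
    (hpr : p r = r) (hR : (G.induce R).Connected) (hr : r ∈ R) {v : V} (hv : v ∈ R) (n : ℕ) :
    p^[n] v ∈ R := by
  induction n with
  | zero => exact hv
  | succ n ih =>
    rw [Function.iterate_succ_apply']
    exact parent_mem_of_induce_connected hadj hpr hR hr ih

theorem induce_connected_of_parent (hadj : ∀ v, v ≠ r → G.Adj v (p v))
    (hroot : ∀ v, ∃ n, p^[n] v = r) (hr : r ∈ R) (hp : ∀ v ∈ R, p v ∈ R) :
    (G.induce R).Connected := by
  have reach : ∀ n v (hv : v ∈ R), p^[n] v = r → (G.induce R).Reachable ⟨v, hv⟩ ⟨r, hr⟩ := by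
    intro n
    induction n with
    | zero => rintro v hv rfl; rfl
    | succ n ih =>
      intro v hv hn
      by_cases hvr : v = r
      · subst hvr; rfl
      have hadj' : (G.induce R).Adj ⟨v, hv⟩ ⟨p v, hp v hv⟩ := hadj v hvr
      exact hadj'.reachable.trans (ih _ _ hn)
  rw [connected_iff]
  refine ⟨fun u w ↦ ?_, ⟨⟨r, hr⟩⟩⟩
  obtain ⟨k, hk⟩ := hroot u
  obtain ⟨n, hn⟩ := hroot w
  exact (reach k u u.2 hk).trans (reach n w w.2 hn).symm

end SimpleGraph

theorem Finset.map_val_eq_iff_existsUnique {α β : Type*} {s : Finset α} {f : α → β}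
    {M : Multiset β} (hM : M.Nodup) :
    s.val.map f = M ↔ (∀ a ∈ s, f a ∈ M) ∧ ∀ b ∈ M, ∃! a, a ∈ s ∧ f a = b := by
  constructor
  · rintro rfl
    refine ⟨fun a ha ↦ Multiset.mem_map_of_mem f ha, fun b hb ↦ ?_⟩
    obtain ⟨a, ha, rfl⟩ := Multiset.mem_map.1 hb
    exact ⟨a, ⟨ha, rfl⟩, fun a' ⟨ha', h⟩ ↦ Multiset.inj_on_of_nodup_map hM a' ha' a ha h⟩
  · rintro ⟨hmem, huniq⟩
    have hinj : ∀ a ∈ s.val, ∀ a' ∈ s.val, f a = f a' → a = a' := fun a ha a' ha' h ↦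
      (huniq _ (hmem a ha)).unique ⟨ha, rfl⟩ ⟨ha', h.symm⟩
    refine (Multiset.Nodup.ext (s.nodup.map_on hinj) hM).2 fun b ↦ ⟨fun hb ↦ ?_, fun hb ↦ ?_⟩
    · obtain ⟨a, ha, rfl⟩ := Multiset.mem_map.1 hb
      exact hmem a ha
    · obtain ⟨a, ⟨ha, rfl⟩, -⟩ := huniq b hb
      exact Multiset.mem_map_of_mem f ha

section X3CTree

variable {m : ℕ}

abbrev x3cTree (m : ℕ) : SimpleGraph (Option (Fin m × Fin 7)) := SimpleGraph.fromRel (x3cRel m)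

def x3cParent : Option (Fin m × Fin 7) → Option (Fin m × Fin 7)
  | none => none
  | some (i, j) => if j = 0 ∨ j = 5 then none else some (i, j - 1)

/-- The vertex `e_{i,j+1}`. -/
def x3cElem (i : Fin m) (j : Fin 3) : Option (Fin m × Fin 7) := some (i, ⟨j + 1, by omega⟩)

lemma x3cElem_inj {i i' : Fin m} {j j' : Fin 3} :
    x3cElem i j = x3cElem i' j' ↔ i = i' ∧ j = j' := by
  simp [x3cElem, Fin.ext_iff]

lemma eq_x3cParent_of_x3cRel {a b : Option (Fin m × Fin 7)} (h : x3cRel m a b) :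
    a = x3cParent b := by
  rcases h with ⟨i, rfl, rfl | rfl⟩ | ⟨i, ⟨j, _⟩, ⟨j', _⟩, hj, hj', rfl, rfl⟩ | ⟨i, rfl, rfl⟩
  · rfl
  · rfl
  · simp only at hj hj'
    subst hj'
    interval_cases j <;> rfl
  · rfl

lemma eq_x3cParent_of_x3cTree_adj {a b : Option (Fin m × Fin 7)} (h : (x3cTree m).Adj a b) :
    a = x3cParent b ∨ b = x3cParent a :=
  ((SimpleGraph.fromRel_adj _ _ _).1 h).2.imp eq_x3cParent_of_x3cRel eq_x3cParent_of_x3cRel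

lemma x3cTree_adj_x3cParent {v : Option (Fin m × Fin 7)} (hv : v ≠ none) :
    (x3cTree m).Adj v (x3cParent v) := by
  obtain ⟨⟨i, j⟩, rfl⟩ := Option.ne_none_iff_exists'.1 hv
  refine (SimpleGraph.fromRel_adj _ _ _).2 ⟨?_, Or.inr ?_⟩
  · fin_cases j <;> simp [x3cParent]
  · fin_cases j
    · exact Or.inl ⟨i, rfl, Or.inl rfl⟩
    rotate_left 4
    · exact Or.inl ⟨i, rfl, Or.inr rfl⟩
    · exact Or.inr (Or.inr ⟨i, rfl, rfl⟩)
    all_goals exact Or.inr (Or.inl ⟨i, _, _, by decide, rfl, rfl, rfl⟩)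

lemma x3cParent_iterate_five (v : Option (Fin m × Fin 7)) : x3cParent^[5] v = none := by
  rcases v with _ | ⟨i, j⟩
  · rfl
  · fin_cases j <;> rfl

lemma x3cParent_iterate_x3cElem (i : Fin m) (j : Fin 3) :
    x3cParent^[j + 1] (x3cElem i j) = some (i, 0) := by
  fin_cases j <;> rfl

lemma x3cParent_iterate_sub_x3cElem (i : Fin m) (j : Fin 3) :
    x3cParent^[3 - j] (some (i, 4)) = x3cElem i j := by
  fin_cases j <;> rfl

end X3CTree

section X3CColor

variable {m q : ℕ} {x : Fin m → Fin 3 → Fin (3 * q)} {v : Option (Fin m × Fin 7)}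

abbrev x3cColors (m q : ℕ) : Multiset ℕ := (Multiset.range (2 * m + 3 * q + 1)).map (· + 1)

lemma nodup_x3cColors : (x3cColors m q).Nodup :=
  (Multiset.nodup_range _).map fun _ _ ↦ Nat.add_right_cancel

lemma mem_x3cColors {k : ℕ} : k ∈ x3cColors m q ↔ 1 ≤ k ∧ k ≤ 2 * m + 3 * q + 1 := by
  simp only [Multiset.mem_map, Multiset.mem_range]
  exact ⟨by rintro ⟨k, hk, rfl⟩; omega, fun h ↦ ⟨k - 1, by omega, by omega⟩⟩

lemma x3cColors_cases {k : ℕ} (hk : k ∈ x3cColors m q) :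
    k = 2 * m + 3 * q + 1 ∨ (∃ i : Fin m, k = i + 1) ∨ (∃ i : Fin m, k = m + i + 1) ∨
      ∃ w : Fin (3 * q), k = 2 * m + w + 1 := by
  rw [mem_x3cColors] at hk
  by_cases h1 : k ≤ m
  · exact Or.inr (Or.inl ⟨⟨k - 1, by omega⟩, by simp; omega⟩)
  by_cases h2 : k ≤ 2 * m
  · exact Or.inr (Or.inr (Or.inl ⟨⟨k - m - 1, by omega⟩, by simp; omega⟩))
  by_cases h3 : k ≤ 2 * m + 3 * q
  · exact Or.inr (Or.inr (Or.inr ⟨⟨k - 2 * m - 1, by omega⟩, by simp; omega⟩))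
  · exact Or.inl (by omega)

lemma x3cColor_mem_x3cColors (v : Option (Fin m × Fin 7)) : x3cColor m q x v ∈ x3cColors m q := by
  rw [mem_x3cColors]
  rcases v with _ | ⟨i, j⟩
  · simp [x3cColor]
  · have := (x i 0).isLt; have := (x i 1).isLt; have := (x i 2).isLt
    fin_cases j <;> simp [x3cColor] <;> omega

lemma x3cColor_eq_root_iff : x3cColor m q x v = 2 * m + 3 * q + 1 ↔ v = none := by
  refine ⟨fun h ↦ ?_, by rintro rfl; rfl⟩
  rcases v with _ | ⟨i, j⟩
  · rfl
  · have := i.isLt; have := (x i 0).isLt; have := (x i 1).isLt; have := (x i 2).isLt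
    fin_cases j <;> simp [x3cColor] at h <;> omega

lemma x3cColor_eq_start_iff (i : Fin m) :
    x3cColor m q x v = i + 1 ↔ v = some (i, 0) ∨ v = some (i, 5) := by
  refine ⟨fun h ↦ ?_, by rintro (rfl | rfl) <;> rfl⟩
  rcases v with _ | ⟨i', j⟩
  · simp [x3cColor] at h; omega
  · have := i.isLt; have := i'.isLt
    fin_cases j <;> simp [x3cColor, Fin.ext_iff] at h ⊢ <;> omega

lemma x3cColor_eq_end_iff (i : Fin m) :
    x3cColor m q x v = m + i + 1 ↔ v = some (i, 4) ∨ v = some (i, 6) := by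
  refine ⟨fun h ↦ ?_, by rintro (rfl | rfl) <;> rfl⟩
  rcases v with _ | ⟨i', j⟩
  · simp [x3cColor] at h; omega
  · have := i.isLt; have := i'.isLt
    fin_cases j <;> simp [x3cColor, Fin.ext_iff] at h ⊢ <;> omega

lemma x3cColor_x3cElem (i : Fin m) (j : Fin 3) :
    x3cColor m q x (x3cElem i j) = 2 * m + x i j + 1 := by
  fin_cases j <;> rfl

lemma x3cColor_eq_elem_iff (w : Fin (3 * q)) :
    x3cColor m q x v = 2 * m + w + 1 ↔ ∃ i j, x i j = w ∧ v = x3cElem i j := by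
  refine ⟨fun h ↦ ?_, by rintro ⟨i, j, rfl, rfl⟩; exact x3cColor_x3cElem i j⟩
  rcases v with _ | ⟨i, j⟩
  · simp [x3cColor] at h; omega
  · have := i.isLt; have := w.isLt
    fin_cases j <;> simp [x3cColor] at h
    rotate_left
    iterate 3 · exact ⟨i, _, Fin.ext h, rfl⟩
    all_goals omega

end X3CColor

section X3CReduction

variable {m q : ℕ} {x : Fin m → Fin 3 → Fin (3 * q)} {T : Finset (Fin m)}

lemma exists_exactCover_of_isMotifSolution {R : Finset (Option (Fin m × Fin 7))}
    (hR : IsMotifSolution (x3cTree m) (x3cColor m q x) (x3cColors m q) R) :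
    ∃ T : Finset (Fin m), ∀ w : Fin (3 * q), ∃! i : Fin m, i ∈ T ∧ ∃ j : Fin 3, x i j = w := by
  obtain ⟨hconn, hcol⟩ := hR
  obtain ⟨-, huniq⟩ := (Finset.map_val_eq_iff_existsUnique nodup_x3cColors).1 hcol
  have hex : ∀ k, 1 ≤ k → k ≤ 2 * m + 3 * q + 1 → ∃ v ∈ R, x3cColor m q x v = k :=
    fun k h1 h2 ↦ (huniq k (mem_x3cColors.2 ⟨h1, h2⟩)).exists
  have hinj : ∀ a ∈ R, ∀ b ∈ R, x3cColor m q x a = x3cColor m q x b → a = b :=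
    fun a ha b hb h ↦ (huniq _ (x3cColor_mem_x3cColors a)).unique ⟨ha, rfl⟩ ⟨hb, h.symm⟩
  have hroot : none ∈ R := by
    obtain ⟨v, hv, h⟩ := hex _ (by omega) le_rfl
    rwa [x3cColor_eq_root_iff.1 h] at hv
  have hiter : ∀ v ∈ R, ∀ n, x3cParent^[n] v ∈ R := fun v hv n ↦
    SimpleGraph.iterate_mem_of_induce_connected (fun _ _ ↦ eq_x3cParent_of_x3cTree_adj) rfl
      hconn hroot hv n
  -- The end of colour `m + i + 1` cannot be `bᵢ²`: its parent `aᵢ²` would repeat the colour of `aᵢ¹`.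
  have helem : ∀ i, some (i, 0) ∈ R → ∀ j, x3cElem i j ∈ R := by
    intro i hi j
    obtain ⟨v, hv, h⟩ := hex (m + i + 1) (by omega) (by omega)
    rcases (x3cColor_eq_end_iff i).1 h with rfl | rfl
    · simpa only [x3cParent_iterate_sub_x3cElem] using hiter _ hv (3 - j)
    · have h5 : some (i, 5) ∈ R := hiter _ hv 1
      have := hinj _ hi _ h5 rfl
      simp at this
  refine ⟨Finset.univ.filter fun i ↦ some (i, 0) ∈ R, fun w ↦ ?_⟩
  obtain ⟨v, hv, h⟩ := hex (2 * m + w + 1) (by omega) (by omega)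
  obtain ⟨i, j, rfl, rfl⟩ := (x3cColor_eq_elem_iff _).1 h
  have hi : some (i, 0) ∈ R := by simpa only [x3cParent_iterate_x3cElem] using hiter _ hv (j + 1)
  refine ⟨i, ⟨by simpa using hi, j, rfl⟩, fun i' ⟨hi', j', hj'⟩ ↦ ?_⟩
  have := hinj _ (helem i' (Finset.mem_filter.1 hi').2 j') _ hv
    (by rw [x3cColor_x3cElem, x3cColor_x3cElem, hj'])
  exact (x3cElem_inj.1 this).1

/-- The long path `aᵢ¹ … bᵢ¹` for `i ∈ T`, the short path `aᵢ² bᵢ²` otherwise, and the root. -/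
def coverSolution (T : Finset (Fin m)) : Finset (Option (Fin m × Fin 7)) :=
  Finset.insertNone (Finset.univ.filter fun p ↦ p.1 ∈ T ↔ p.2 ≤ 4)

@[simp]
lemma some_mem_coverSolution {i : Fin m} {j : Fin 7} :
    some (i, j) ∈ coverSolution T ↔ (i ∈ T ↔ j ≤ 4) := by
  simp [coverSolution]

lemma x3cElem_mem_coverSolution {i : Fin m} {j : Fin 3} :
    x3cElem i j ∈ coverSolution T ↔ i ∈ T := by
  rw [x3cElem, some_mem_coverSolution]
  exact iff_true_right (Fin.le_def.2 (by simp; omega))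

lemma x3cParent_mem_coverSolution {v : Option (Fin m × Fin 7)} (hv : v ∈ coverSolution T) :
    x3cParent v ∈ coverSolution T := by
  rcases v with _ | ⟨i, j⟩
  · exact hv
  rw [some_mem_coverSolution] at hv
  fin_cases j <;> simp_all [x3cParent, coverSolution]

lemma coverSolution_connected : ((x3cTree m).induce (coverSolution T : Set _)).Connected :=
  SimpleGraph.induce_connected_of_parent (fun _ ↦ x3cTree_adj_x3cParent)
    (fun v ↦ ⟨5, x3cParent_iterate_five v⟩) Finset.none_mem_insertNone
    fun _ ↦ x3cParent_mem_coverSolution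

lemma existsUnique_mem_coverSolution_of_pair (i : Fin m) {a b : Fin 7} (ha : a ≤ 4)
    (hb : ¬b ≤ 4) {P : Option (Fin m × Fin 7) → Prop}
    (hP : ∀ v, P v ↔ v = some (i, a) ∨ v = some (i, b)) :
    ∃! v, v ∈ coverSolution T ∧ P v := by
  by_cases hi : i ∈ T
  · refine ⟨some (i, a), ⟨by simp [hi, ha], (hP _).2 (Or.inl rfl)⟩, fun v ⟨hv, h⟩ ↦ ?_⟩
    rcases (hP v).1 h with rfl | rfl
    · rfl
    · simp [hi, hb] at hv
  · refine ⟨some (i, b), ⟨by simp [hi, hb], (hP _).2 (Or.inr rfl)⟩, fun v ⟨hv, h⟩ ↦ ?_⟩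
    rcases (hP v).1 h with rfl | rfl
    · simp [hi, ha] at hv
    · rfl

lemma existsUnique_mem_coverSolution (hx : ∀ i, Function.Injective (x i))
    (hT : ∀ w : Fin (3 * q), ∃! i : Fin m, i ∈ T ∧ ∃ j : Fin 3, x i j = w) {k : ℕ}
    (hk : k ∈ x3cColors m q) : ∃! v, v ∈ coverSolution T ∧ x3cColor m q x v = k := by
  rcases x3cColors_cases hk with rfl | ⟨i, rfl⟩ | ⟨i, rfl⟩ | ⟨w, rfl⟩
  · exact ⟨none, ⟨Finset.none_mem_insertNone, rfl⟩, fun v ⟨_, h⟩ ↦ x3cColor_eq_root_iff.1 h⟩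
  · exact existsUnique_mem_coverSolution_of_pair i (by decide) (by decide) fun _ ↦
      x3cColor_eq_start_iff i
  · exact existsUnique_mem_coverSolution_of_pair i (by decide) (by decide) fun _ ↦
      x3cColor_eq_end_iff i
  · obtain ⟨i, ⟨hi, j, rfl⟩, huniq⟩ := hT w
    refine ⟨x3cElem i j, ⟨x3cElem_mem_coverSolution.2 hi, x3cColor_x3cElem i j⟩, ?_⟩
    rintro v ⟨hv, h⟩
    obtain ⟨i', j', hj', rfl⟩ := (x3cColor_eq_elem_iff _).1 h
    obtain rfl := huniq i' ⟨x3cElem_mem_coverSolution.1 hv, j', hj'⟩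
    rw [hx i' hj']

lemma isMotifSolution_coverSolution (hx : ∀ i, Function.Injective (x i))
    (hT : ∀ w : Fin (3 * q), ∃! i : Fin m, i ∈ T ∧ ∃ j : Fin 3, x i j = w) :
    IsMotifSolution (x3cTree m) (x3cColor m q x) (x3cColors m q) (coverSolution T) :=
  ⟨coverSolution_connected, (Finset.map_val_eq_iff_existsUnique nodup_x3cColors).2
    ⟨fun v _ ↦ x3cColor_mem_x3cColors v, fun _ ↦ existsUnique_mem_coverSolution hx hT⟩⟩

end X3CReduction

theorem stmt_9_general (q m : ℕ) (x : Fin m → Fin 3 → Fin (3 * q))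
    (hx : ∀ i : Fin m, Function.Injective (x i)) :
    (∃ R : Finset (Option (Fin m × Fin 7)),
      IsMotifSolution (SimpleGraph.fromRel (x3cRel m)) (x3cColor m q x)
        ((Multiset.range (2 * m + 3 * q + 1)).map (· + 1)) R) ↔
    ∃ T : Finset (Fin m), ∀ w : Fin (3 * q),
      ∃! i : Fin m, i ∈ T ∧ ∃ j : Fin 3, x i j = w :=
  ⟨fun ⟨_, hR⟩ ↦ exists_exactCover_of_isMotifSolution hR,
    fun ⟨_, hT⟩ ↦ ⟨_, isMotifSolution_coverSolution hx hT⟩⟩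

/-- With `M` containing each color of `{1, …, 2m+3q+1}` exactly once,
the instance `(T, c, M)` has a motif solution iff the sets `S_i = {x_{i,1}, x_{i,2},
x_{i,3}}` admit an exact cover by 3-sets of `{1, …, 3q}`. -/
theorem stmt_9 (q m : ℕ) (hq : 1 ≤ q) (x : Fin m → Fin 3 → Fin (3 * q))
    (hx : ∀ i : Fin m, Function.Injective (x i)) :
    (∃ R : Finset (Option (Fin m × Fin 7)),
      IsMotifSolution (SimpleGraph.fromRel (x3cRel m)) (x3cColor m q x)
        ((Multiset.range (2 * m + 3 * q + 1)).map (· + 1)) R) ↔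
    ∃ T : Finset (Fin m), ∀ w : Fin (3 * q),
      ∃! i : Fin m, i ∈ T ∧ ∃ j : Fin 3, x i j = w :=
  stmt_9_general q m x hx
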